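/- arXiv:2412.04176 — 7 statements merged into one kernel-verified Lean document; each statement's English description precedes it below -/
import Mathlib

section
/- If P(z) is a complex polynomial of degree n, then max_{|z|=1} |P'(z)| ≤ n · max_{|z|=1} |P(z)|. -/
open Polynomial

noncomputable def maxSphere (P : Polynomial ℂ) (r : ℝ) : ℝ :=
  sSup ((fun z => ‖P.eval z‖) '' Metric.sphere (0:ℂ) r)

noncomputable def Malpha (P : Polynomial ℂ) (n : ℕ) (α : ℝ) : ℝ :=
  sSup ((fun l : ℕ => ‖P.eval (Complex.exp (Complex.I * ((α + 2 * l * Real.pi) / n)))‖) '' Set.Icc 1 n)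

/-!
Let `M` bound `|P|` on the unit circle and `n = deg P`. By the maximum modulus principle applied
to the reversed polynomial, `|P(w)| ≤ M |w|^n` for `|w| ≥ 1` and `|lead P| ≤ M`. If `|P'(z)| > n M`
at some `|z| = 1`, write `P'(z) = c n z^(n-1)` with `|c| > M`. Then `R = P - c X^n` has degree `n`
and no zeros in `|w| ≥ 1`, so by Gauss–Lucas all zeros of `R'` lie in the open unit disc;
but `R'(z) = 0`.
-/

namespace Polynomial

theorem eval_reverse_inv_mul_pow {K : Type*} [Field K] (P : K[X]) {w : K} (hw : w ≠ 0) :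
    P.reverse.eval w⁻¹ * w ^ P.natDegree = P.eval w := by
  let := invertibleOfNonzero hw
  rw [← invOf_eq_inv]
  exact eval₂_reverse_mul_pow (RingHom.id K) w P

theorem mem_of_eval_derivative_eq_zero {P : ℂ[X]} (hP : 0 < P.degree) {s : Set ℂ}
    (hs : Convex ℝ s) (hroots : ∀ w, P.IsRoot w → w ∈ s) {z : ℂ}
    (hz : P.derivative.eval z = 0) : z ∈ s := by
  rw [eq_centerMass_of_eval_derivative_eq_zero hP hz]
  exact hs.centerMass_mem (fun w _ => derivRootWeight_nonneg P z w)
    (sum_derivRootWeight_pos hP z)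
    (fun w hw => hroots w (isRoot_of_mem_roots (Multiset.mem_toFinset.1 hw)))

theorem norm_eval_le_maxSphere (P : ℂ[X]) {r : ℝ} {z : ℂ} (hz : ‖z‖ = r) :
    ‖P.eval z‖ ≤ maxSphere P r :=
  le_csSup ((isCompact_sphere 0 r).image (continuous_norm.comp P.continuous)).bddAbove
    ⟨z, mem_sphere_zero_iff_norm.2 hz, rfl⟩

variable {P : ℂ[X]} {M : ℝ}

theorem norm_eval_reverse_le (hM : ∀ z : ℂ, ‖z‖ = 1 → ‖P.eval z‖ ≤ M) {w : ℂ} (hw : ‖w‖ ≤ 1) :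
    ‖P.reverse.eval w‖ ≤ M := by
  refine Complex.norm_le_of_forall_mem_frontier_norm_le (f := P.reverse.eval)
    Metric.isBounded_ball P.reverse.differentiable.diffContOnCl (fun v hv => ?_)
    (by rwa [closure_ball 0 one_ne_zero, mem_closedBall_zero_iff])
  rw [frontier_ball 0 one_ne_zero, mem_sphere_zero_iff_norm] at hv
  have hv0 : v ≠ 0 := norm_ne_zero_iff.1 (by rw [hv]; exact one_ne_zero)
  have hv' : ‖v⁻¹‖ = 1 := by rw [norm_inv, hv, inv_one]
  calc ‖P.reverse.eval v‖ = ‖P.eval v⁻¹‖ := by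
        rw [← eval_reverse_inv_mul_pow P (inv_ne_zero hv0), inv_inv, norm_mul, norm_pow, hv',
          one_pow, mul_one]
    _ ≤ M := hM _ hv'

theorem norm_leadingCoeff_le (hM : ∀ z : ℂ, ‖z‖ = 1 → ‖P.eval z‖ ≤ M) :
    ‖P.leadingCoeff‖ ≤ M := by
  simpa only [← coeff_zero_eq_eval_zero, coeff_zero_reverse] using
    norm_eval_reverse_le hM (w := 0) (by simp)

theorem norm_eval_le_mul_pow_natDegree (hM : ∀ z : ℂ, ‖z‖ = 1 → ‖P.eval z‖ ≤ M) {w : ℂ}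
    (hw : 1 ≤ ‖w‖) : ‖P.eval w‖ ≤ M * ‖w‖ ^ P.natDegree := by
  have hw0 : w ≠ 0 := norm_pos_iff.1 (one_pos.trans_le hw)
  rw [← eval_reverse_inv_mul_pow P hw0, norm_mul, norm_pow]
  gcongr
  exact norm_eval_reverse_le hM (by rw [norm_inv]; exact inv_le_one_of_one_le₀ hw)

theorem eval_derivative_ne_of_norm_lt (hM : ∀ z : ℂ, ‖z‖ = 1 → ‖P.eval z‖ ≤ M)
    (hn : 0 < P.natDegree) {c : ℂ} (hc : M < ‖c‖) {z : ℂ} (hz : 1 ≤ ‖z‖) :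
    P.derivative.eval z ≠ c * P.natDegree * z ^ (P.natDegree - 1) := by
  set n := P.natDegree
  set R := P - C c * X ^ n
  have hroots : ∀ w, R.IsRoot w → w ∈ Metric.ball (0 : ℂ) 1 := by
    intro w hw
    rw [mem_ball_zero_iff]
    by_contra! hw1
    have hPw : P.eval w = c * w ^ n := by simpa [R, sub_eq_zero] using hw
    have hbound := norm_eval_le_mul_pow_natDegree hM hw1
    rw [hPw, norm_mul, norm_pow] at hbound
    have : 0 < ‖w‖ ^ n := pow_pos (one_pos.trans_le hw1) n
    nlinarith
  have hdeg : 0 < R.degree := by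
    have hcoeff : R.coeff n ≠ 0 := by
      have hlead := norm_leadingCoeff_le hM
      simp only [R, coeff_sub, coeff_C_mul_X_pow, if_true, sub_ne_zero]
      rintro rfl
      exact hc.not_ge hlead
    exact lt_of_lt_of_le (by exact_mod_cast hn) (le_degree_of_ne_zero hcoeff)
  intro hder
  have hzR := mem_of_eval_derivative_eq_zero hdeg (convex_ball 0 1) hroots
    (z := z) (by rw [derivative_sub, derivative_C_mul_X_pow]; simp [hder, mul_comm])
  exact (mem_ball_zero_iff.1 hzR).not_ge hz

theorem norm_eval_derivative_le (hM : ∀ z : ℂ, ‖z‖ = 1 → ‖P.eval z‖ ≤ M) {z : ℂ}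
    (hz : ‖z‖ = 1) : ‖P.derivative.eval z‖ ≤ P.natDegree * M := by
  rcases Nat.eq_zero_or_pos P.natDegree with h0 | hn
  · simp [derivative_of_natDegree_zero h0, h0]
  by_contra! hlt
  set n := P.natDegree
  have hz0 : z ≠ 0 := norm_ne_zero_iff.1 (by rw [hz]; exact one_ne_zero)
  have hnz : (n : ℂ) * z ^ (n - 1) ≠ 0 :=
    mul_ne_zero (Nat.cast_ne_zero.2 hn.ne') (pow_ne_zero _ hz0)
  have hnorm : ‖(n : ℂ) * z ^ (n - 1)‖ = n := by simp [hz]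
  refine eval_derivative_ne_of_norm_lt hM hn (c := P.derivative.eval z / (n * z ^ (n - 1)))
    ?_ hz.ge ?_
  · rw [norm_div, hnorm, lt_div_iff₀ (by exact_mod_cast hn)]
    linarith
  · rw [mul_assoc, div_mul_cancel₀ _ hnz]

end Polynomial

theorem stmt_0_general (n : ℕ) (P : Polynomial ℂ) (hdeg : P.natDegree = n) :
    maxSphere (derivative P) 1 ≤ n * maxSphere P 1 := by
  subst hdeg
  have hM : ∀ z : ℂ, ‖z‖ = 1 → ‖P.eval z‖ ≤ maxSphere P 1 :=
    fun _ hz => norm_eval_le_maxSphere P hz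
  refine Real.sSup_le ?_ (mul_nonneg (Nat.cast_nonneg _) ((norm_nonneg _).trans (hM 1 norm_one)))
  rintro _ ⟨z, hz, rfl⟩
  exact norm_eval_derivative_le hM (mem_sphere_zero_iff_norm.1 hz)

theorem stmt_0 (n : ℕ) (hn : 1 ≤ n) (P : Polynomial ℂ) (hdeg : P.natDegree = n) :
    maxSphere (derivative P) 1 ≤ n * maxSphere P 1 :=
  stmt_0_general n P hdeg
end

section
/- If P(z) is a complex polynomial of degree n, then max_{|z|=1} |P'(z)| ≤ n · max_{1 ≤ l ≤ 2n} |P(e^{i l π / n})|, i.e., the derivative on the unit circle is bounded by n times the maximum of |P| over the (2n)-th roots of unity. -/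
open Polynomial

/-!
Let `ζ` be a primitive `N`-th root of unity with `N ≥ 2n` and put
`K(w, z) = w⁻¹ (∑_{p<n} (z/w)^p)^2`. For `deg P ≤ n` one has the interpolation formula
`N P'(z) = ∑_{l<N} P(ζ^l) K(ζ^l, z)`: on monomials both sides reduce, by orthogonality of the
characters `l ↦ ζ^{lm}`, to counting the pairs `p, q < n` with `p + q + 1 = j`, of which there are
`j`. For `|z| = 1` we have `|K(ζ^l, z)| = |∑_{p<n} (z ζ^{-l})^p|^2`, and discrete Parseval gives
`∑_l |K(ζ^l, z)| = N n`. The triangle inequality then yields `|P'(z)| ≤ n max_l |P(ζ^l)|`.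
-/

open Finset

variable {N n : ℕ}

section Field

variable {K : Type*} [Field K]

theorem IsPrimitiveRoot.sum_pow_zpow_eq_ite {ζ : K} (hζ : IsPrimitiveRoot ζ N) {m : ℤ}
    (hm : |m| < N) :
    ∑ l ∈ range N, (ζ ^ l) ^ m = if m = 0 then (N : K) else 0 := by
  have hterm : ∀ l : ℕ, (ζ ^ l) ^ m = (ζ ^ m) ^ l := fun l => by
    rw [← zpow_natCast, ← zpow_mul, ← zpow_natCast (ζ ^ m), ← zpow_mul, mul_comm]
  simp only [hterm]
  split_ifs with h
  · simp [h]
  · have hne : ζ ^ m - 1 ≠ 0 :=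
      sub_ne_zero.2 fun h1 => h (Int.eq_zero_of_abs_lt_dvd ((hζ.zpow_eq_one_iff_dvd m).1 h1) hm)
    have hpow : (ζ ^ m) ^ N = 1 := by
      rw [← zpow_natCast, ← zpow_mul, mul_comm, zpow_mul, zpow_natCast, hζ.pow_eq_one, one_zpow]
    exact (mul_eq_zero.1 (by rw [geom_sum_mul, hpow, sub_self])).resolve_right hne

def derivativeKernel (n : ℕ) (w z : K) : K := (∑ p ∈ range n, (z / w) ^ p) ^ 2 / w

theorem pow_mul_derivativeKernel {w : K} (hw : w ≠ 0) (j : ℕ) (z : K) :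
    w ^ j * derivativeKernel n w z =
      ∑ p ∈ range n, ∑ q ∈ range n, z ^ (p + q) * w ^ ((j : ℤ) - (p + q + 1)) := by
  rw [derivativeKernel, sq, sum_mul_sum, sum_div, mul_sum]
  refine sum_congr rfl fun p _ => ?_
  rw [sum_div, mul_sum]
  refine sum_congr rfl fun q _ => ?_
  rw [zpow_sub₀ hw, zpow_add₀ hw, zpow_one, ← Nat.cast_add, zpow_natCast, zpow_natCast,
    div_pow, div_pow]
  field_simp
  ring

theorem sum_sum_ite_add_add_one_eq {j : ℕ} (hj : j ≤ n) (x : K) :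
    ∑ p ∈ range n, ∑ q ∈ range n, (if p + q + 1 = j then x else 0) = j * x := by
  have hinner : ∀ p ∈ range n,
      ∑ q ∈ range n, (if p + q + 1 = j then x else 0) = if p ∈ range j then x else 0 := by
    intro p hp
    rw [mem_range] at hp
    split_ifs with hpj
    · rw [mem_range] at hpj
      rw [sum_eq_single_of_mem (j - 1 - p) (mem_range.2 (by omega)), if_pos (by omega)]
      exact fun q _ hq => if_neg (by omega)
    · rw [mem_range] at hpj
      exact sum_eq_zero fun q _ => if_neg (by omega)
  rw [sum_congr rfl hinner, sum_ite_mem, inter_eq_right.2 (range_subset_range.2 hj)]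
  simp

variable {ζ : K}

theorem IsPrimitiveRoot.sum_pow_mul_derivativeKernel (hζ : IsPrimitiveRoot ζ N) (hnN : 2 * n ≤ N)
    {j : ℕ} (hj : j ≤ n) (z : K) :
    ∑ l ∈ range N, (ζ ^ l) ^ j * derivativeKernel n (ζ ^ l) z = N * (j * z ^ (j - 1)) := by
  calc ∑ l ∈ range N, (ζ ^ l) ^ j * derivativeKernel n (ζ ^ l) z
      = ∑ p ∈ range n, ∑ q ∈ range n,
          z ^ (p + q) * ∑ l ∈ range N, (ζ ^ l) ^ ((j : ℤ) - (p + q + 1)) := by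
        rw [sum_congr rfl fun l hl => pow_mul_derivativeKernel
          (pow_ne_zero l (hζ.ne_zero (by simp at hl; omega))) j z, sum_comm]
        simp only [mul_sum]
        exact sum_congr rfl fun p _ => sum_comm
    _ = N * ∑ p ∈ range n, ∑ q ∈ range n, (if p + q + 1 = j then z ^ (j - 1) else 0) := by
        rw [mul_sum]
        refine sum_congr rfl fun p hp => ?_
        rw [mul_sum]
        refine sum_congr rfl fun q hq => ?_
        simp only [mem_range] at hp hq
        rw [hζ.sum_pow_zpow_eq_ite (by rw [abs_lt]; omega)]
        by_cases h : p + q + 1 = j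
        · rw [if_pos (by omega), if_pos h, ← h]
          simp [mul_comm]
        · rw [if_neg (by omega), if_neg h]
          simp
    _ = N * (j * z ^ (j - 1)) := by rw [sum_sum_ite_add_add_one_eq hj]

theorem IsPrimitiveRoot.mul_derivative_eval_eq_sum (hζ : IsPrimitiveRoot ζ N) (hnN : 2 * n ≤ N)
    {P : K[X]} (hP : P.natDegree ≤ n) (z : K) :
    N * P.derivative.eval z = ∑ l ∈ range N, P.eval (ζ ^ l) * derivativeKernel n (ζ ^ l) z := by
  rw [P.as_sum_range' (n + 1) (by omega)]
  simp only [derivative_sum, eval_finsetSum, derivative_monomial, eval_monomial, sum_mul, mul_sum]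
  rw [sum_comm]
  refine sum_congr rfl fun j hj => ?_
  simp only [mul_assoc, ← mul_sum]
  rw [hζ.sum_pow_mul_derivativeKernel hnN (by simp at hj; omega)]
  ring

end Field

theorem Complex.mul_conj_sum_mul_pow {w : ℂ} (hw : ‖w‖ = 1) (n : ℕ) (c : ℕ → ℂ) :
    (∑ p ∈ range n, c p * w ^ p) * (starRingEnd ℂ) (∑ p ∈ range n, c p * w ^ p) =
      ∑ p ∈ range n, ∑ q ∈ range n, c p * (starRingEnd ℂ) (c q) * w ^ ((p : ℤ) - q) := by
  have hw0 : w ≠ 0 := norm_ne_zero_iff.1 (hw.trans_ne one_ne_zero)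
  simp only [map_sum, map_mul, map_pow, ← Complex.inv_eq_conj hw, sum_mul_sum]
  refine sum_congr rfl fun p _ => sum_congr rfl fun q _ => ?_
  rw [zpow_sub₀ hw0, zpow_natCast, zpow_natCast, inv_pow, div_eq_mul_inv]
  ring

theorem IsPrimitiveRoot.sum_norm_sum_mul_pow_sq {ζ : ℂ} (hζ : IsPrimitiveRoot ζ N) (hnN : n ≤ N)
    (c : ℕ → ℂ) :
    ∑ l ∈ range N, ‖∑ p ∈ range n, c p * (ζ ^ l) ^ p‖ ^ 2 = N * ∑ p ∈ range n, ‖c p‖ ^ 2 := by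
  apply Complex.ofReal_injective
  push_cast
  calc ∑ l ∈ range N, (‖∑ p ∈ range n, c p * (ζ ^ l) ^ p‖ : ℂ) ^ 2
      = ∑ p ∈ range n, ∑ q ∈ range n,
          c p * (starRingEnd ℂ) (c q) * ∑ l ∈ range N, (ζ ^ l) ^ ((p : ℤ) - q) := by
        have hnorm : ∀ l ∈ range N, ‖ζ ^ l‖ = 1 := fun l hl => by
          rw [norm_pow, hζ.norm'_eq_one (by simp at hl; omega), one_pow]
        rw [sum_congr rfl fun l hl =>
          (Complex.mul_conj' _).symm.trans (Complex.mul_conj_sum_mul_pow (hnorm l hl) n c)]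
        simp only [mul_sum]
        rw [sum_comm]
        exact sum_congr rfl fun p _ => sum_comm
    _ = ∑ p ∈ range n, c p * (starRingEnd ℂ) (c p) * N := by
        refine sum_congr rfl fun p hp => ?_
        have hpn : p < n := mem_range.1 hp
        rw [sum_eq_single_of_mem p hp, sub_self, hζ.sum_pow_zpow_eq_ite (by simp; omega), if_pos rfl]
        intro q hq hqp
        simp only [mem_range] at hq
        rw [hζ.sum_pow_zpow_eq_ite (by rw [abs_lt]; omega), if_neg (by omega), mul_zero]
    _ = N * ∑ p ∈ range n, (‖c p‖ : ℂ) ^ 2 := by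
        simp only [Complex.mul_conj', mul_sum, mul_comm]

theorem IsPrimitiveRoot.sum_norm_derivativeKernel {ζ : ℂ} (hζ : IsPrimitiveRoot ζ N)
    (hnN : n ≤ N) {z : ℂ} (hz : ‖z‖ = 1) :
    ∑ l ∈ range N, ‖derivativeKernel n (ζ ^ l) z‖ = N * n := by
  have hkernel : ∀ l ∈ range N,
      ‖derivativeKernel n (ζ ^ l) z‖ = ‖∑ p ∈ range n, z ^ p * (ζ⁻¹ ^ l) ^ p‖ ^ 2 := fun l hl => by
    have hw : ‖ζ ^ l‖ = 1 := by rw [norm_pow, hζ.norm'_eq_one (by simp at hl; omega), one_pow]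
    rw [derivativeKernel, norm_div, norm_pow, hw, div_one]
    simp only [div_eq_mul_inv, mul_pow, inv_pow]
  rw [sum_congr rfl hkernel, hζ.inv.sum_norm_sum_mul_pow_sq hnN]
  simp [hz]

theorem IsPrimitiveRoot.norm_derivative_eval_le {ζ : ℂ} (hζ : IsPrimitiveRoot ζ N)
    (hnN : 2 * n ≤ N) (hN : 0 < N) {P : ℂ[X]} (hP : P.natDegree ≤ n) {M : ℝ}
    (hM : ∀ l < N, ‖P.eval (ζ ^ l)‖ ≤ M) {z : ℂ} (hz : ‖z‖ = 1) :
    ‖P.derivative.eval z‖ ≤ n * M := by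
  have hbound : N * ‖P.derivative.eval z‖ ≤ N * (n * M) := calc
    N * ‖P.derivative.eval z‖
        = ‖∑ l ∈ range N, P.eval (ζ ^ l) * derivativeKernel n (ζ ^ l) z‖ := by
      rw [← hζ.mul_derivative_eval_eq_sum hnN hP z, norm_mul, Complex.norm_natCast]
    _ ≤ ∑ l ∈ range N, ‖P.eval (ζ ^ l)‖ * ‖derivativeKernel n (ζ ^ l) z‖ :=
      (norm_sum_le _ _).trans_eq (by simp only [norm_mul])
    _ ≤ ∑ l ∈ range N, M * ‖derivativeKernel n (ζ ^ l) z‖ :=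
      sum_le_sum fun l hl => mul_le_mul_of_nonneg_right (hM l (mem_range.1 hl)) (norm_nonneg _)
    _ = N * (n * M) := by
      rw [← mul_sum, hζ.sum_norm_derivativeKernel (by omega) hz]
      ring
  exact le_of_mul_le_mul_left hbound (by exact_mod_cast hN)

theorem stmt_1 (n : ℕ) (hn : 1 ≤ n) (P : Polynomial ℂ) (hdeg : P.natDegree = n) :
    maxSphere (derivative P) 1 ≤
      n * sSup ((fun l : ℕ => ‖P.eval (Complex.exp (Complex.I * (l * Real.pi / n)))‖) ''
        Set.Icc 1 (2 * n)) := by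
  set ζ := Complex.exp (2 * Real.pi * Complex.I / (2 * n : ℕ))
  have hζ : IsPrimitiveRoot ζ (2 * n) := Complex.isPrimitiveRoot_exp _ (by omega)
  have hnode (l : ℕ) : Complex.exp (Complex.I * (l * Real.pi / n)) = ζ ^ l := by
    rw [← Complex.exp_nat_mul]
    congr 1
    push_cast
    field_simp
  set f := fun l : ℕ => ‖P.eval (Complex.exp (Complex.I * (l * Real.pi / n)))‖
  have hM (l : ℕ) (hl : l < 2 * n) : ‖P.eval (ζ ^ l)‖ ≤ sSup (f '' Set.Icc 1 (2 * n)) := by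
    obtain ⟨k, hk, hkl⟩ : ∃ k ∈ Set.Icc 1 (2 * n), ζ ^ k = ζ ^ l := by
      rcases Nat.eq_zero_or_pos l with rfl | hl0
      · exact ⟨2 * n, ⟨by omega, le_rfl⟩, by rw [hζ.pow_eq_one, pow_zero]⟩
      · exact ⟨l, ⟨hl0, hl.le⟩, rfl⟩
    refine le_csSup ((Set.finite_Icc 1 (2 * n)).image f).bddAbove ⟨k, hk, ?_⟩
    simp only [f, hnode, hkl]
  refine Real.sSup_le ?_ (mul_nonneg n.cast_nonneg (Real.sSup_nonneg ?_))
  · rintro _ ⟨z, hz, rfl⟩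
    exact hζ.norm_derivative_eval_le le_rfl (by omega) hdeg.le hM (by simpa using hz)
  · rintro _ ⟨l, -, rfl⟩
    exact norm_nonneg _
end

section
/- If P(z) is a complex polynomial of degree n, then for every real α, max_{|z|=1} |P'(z)| ≤ (n/2)(M_α + M_{α+π}), where M_α = max_{1 ≤ l ≤ n} |P(e^{i(α+2lπ)/n})|. -/
open Polynomial

/-!
A Riesz-type interpolation formula: if `deg Q ≤ n` and `ζ₀, …, ζ_{2n-1}` is a rotated copy of
the `2n`-th roots of unity, then `2n Q'(1) = ∑ₖ F(ζₖ) ζₖ⁻ⁿ Q(ζₖ)` with the nonnegative Fejér kernel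
`F(ζ) = |1 + ζ + ⋯ + ζⁿ⁻¹|²`; both sides are linear in `Q` and agree on monomials by
orthogonality of the characters `ζ ↦ ζᵉ`, `|e| < 2n`. Applied to `Q(ζ) = P(zζ)` with the rotation
chosen so that the points `zζₖ` are `e^{i(α + kπ)/n}`, the even `k` give the nodes of `M_α` and the
odd `k` those of `M_{α+π}`. Over each parity class `F` sums to `n²`, so the triangle inequality
gives `2n |P'(z)| ≤ n² (M_α + M_{α+π})`.
-/

open Finset

lemma IsPrimitiveRoot.norm_mul_pow_eq_one {N : ℕ} {ω : ℂ} (hω : IsPrimitiveRoot ω N) (hN : N ≠ 0)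
    {c : ℂ} (hc : ‖c‖ = 1) (k : ℕ) : ‖c * ω ^ k‖ = 1 := by
  rw [norm_mul, norm_pow, hc, hω.norm'_eq_one hN, one_pow, mul_one]

theorem IsPrimitiveRoot.sum_mul_pow_zpow {N : ℕ} {ω : ℂ} (hω : IsPrimitiveRoot ω N) (c : ℂ)
    {e : ℤ} (he : |e| < N) :
    ∑ k ∈ range N, (c * ω ^ k) ^ e = if e = 0 then (N : ℂ) else 0 := by
  split_ifs with h0
  · simp [h0]
  have hωe : ω ^ e ≠ 1 := fun h =>
    h0 (Int.eq_zero_of_abs_lt_dvd ((hω.zpow_eq_one_iff_dvd e).1 h) he)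
  have hωeN : (ω ^ e) ^ N = 1 := by
    rw [← zpow_natCast, ← zpow_mul, mul_comm, zpow_mul, zpow_natCast, hω.pow_eq_one, one_zpow]
  simp_rw [mul_zpow, ← zpow_natCast, ← zpow_mul, mul_comm _ e, zpow_mul, zpow_natCast, ← mul_sum,
    geom_sum_eq hωe, hωeN, sub_self, zero_div, mul_zero]

lemma Finset.sum_range_sum_range_ite_add_eq {M : Type*} [AddCommMonoid M] {m n : ℕ} (hm : m ≤ n)
    (x : M) : ∑ j ∈ range n, ∑ l ∈ range n, (if j + m = l + n then x else 0) = m • x := by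
  have hinner : ∀ l ∈ range n,
      (∑ j ∈ range n, if j + m = l + n then x else 0) = if l < m then x else 0 := by
    intro l hl
    simp_rw [show ∀ j, (j + m = l + n ↔ j = l + n - m) from fun j => by omega]
    rw [sum_ite_eq' (range n)]
    simp only [mem_range] at hl ⊢
    congr 1
    apply propext; omega
  rw [sum_comm, sum_congr rfl hinner, sum_ite, sum_const_zero, add_zero, sum_const,
    show {l ∈ range n | l < m} = range m by ext; simp; omega, card_range]

lemma Finset.sum_range_two_mul {M : Type*} [AddCommMonoid M] (n : ℕ) (f : ℕ → M) :
    ∑ k ∈ range (2 * n), f k = ∑ k ∈ range n, f (2 * k) + ∑ k ∈ range n, f (2 * k + 1) := by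
  induction n with
  | zero => simp
  | succ n ih =>
    rw [show 2 * (n + 1) = 2 * n + 1 + 1 by ring, sum_range_succ, sum_range_succ, ih,
      sum_range_succ, sum_range_succ]
    abel

noncomputable def fejerKernel (n : ℕ) (ζ : ℂ) : ℝ := ‖∑ j ∈ range n, ζ ^ j‖ ^ 2

lemma fejerKernel_nonneg (n : ℕ) (ζ : ℂ) : 0 ≤ fejerKernel n ζ := sq_nonneg _

lemma ofReal_fejerKernel {ζ : ℂ} (hζ : ‖ζ‖ = 1) (n : ℕ) :
    (fejerKernel n ζ : ℂ) = ∑ j ∈ range n, ∑ l ∈ range n, ζ ^ ((j : ℤ) - l) := by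
  have hζ0 : ζ ≠ 0 := norm_ne_zero_iff.1 (by rw [hζ]; exact one_ne_zero)
  rw [fejerKernel, Complex.ofReal_pow, ← Complex.mul_conj', map_sum, sum_mul_sum]
  simp_rw [map_pow, ← Complex.inv_eq_conj hζ, zpow_sub₀ hζ0, zpow_natCast, div_eq_mul_inv, inv_pow]

lemma sum_fejerKernel_mul_pow {n : ℕ} {ω : ℂ} (hω : IsPrimitiveRoot ω n) {c : ℂ} (hc : ‖c‖ = 1) :
    ∑ k ∈ range n, fejerKernel n (c * ω ^ k) = (n : ℝ) ^ 2 := by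
  rcases n.eq_zero_or_pos with rfl | hn
  · simp
  apply Complex.ofReal_injective
  push_cast
  simp_rw [ofReal_fejerKernel (hω.norm_mul_pow_eq_one hn.ne' hc _)]
  rw [sum_comm]
  calc ∑ j ∈ range n, ∑ k ∈ range n, ∑ l ∈ range n, (c * ω ^ k) ^ ((j : ℤ) - l)
      = ∑ j ∈ range n, ∑ l ∈ range n, if (j : ℤ) - l = 0 then (n : ℂ) else 0 := by
        refine sum_congr rfl fun j hj => sum_comm.trans (sum_congr rfl fun l hl => ?_)
        simp only [mem_range] at hj hl
        exact hω.sum_mul_pow_zpow c (abs_sub_lt_iff.2 ⟨by omega, by omega⟩)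
    _ = (n : ℂ) ^ 2 := by
        simp +contextual [sub_eq_zero, sq]

lemma sum_fejerKernel_mul_le {n : ℕ} {ω : ℂ} (hω : IsPrimitiveRoot ω n) {c : ℂ} (hc : ‖c‖ = 1)
    {f : ℕ → ℝ} {M : ℝ} (hf : ∀ k < n, f k ≤ M) :
    ∑ k ∈ range n, fejerKernel n (c * ω ^ k) * f k ≤ n ^ 2 * M := by
  rw [← sum_fejerKernel_mul_pow hω hc, sum_mul]
  exact sum_le_sum fun k hk =>
    mul_le_mul_of_nonneg_left (hf k (mem_range.1 hk)) (fejerKernel_nonneg _ _)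

lemma sum_fejerKernel_mul_zpow_mul_pow {n : ℕ} {ω : ℂ} (hω : IsPrimitiveRoot ω (2 * n)) {c : ℂ}
    (hc : ‖c‖ = 1) {m : ℕ} (hm : m ≤ n) :
    ∑ k ∈ range (2 * n), fejerKernel n (c * ω ^ k) * (c * ω ^ k) ^ (-(n : ℤ)) * (c * ω ^ k) ^ m
      = 2 * n * m := by
  rcases n.eq_zero_or_pos with rfl | hn
  · simp
  have hζ := hω.norm_mul_pow_eq_one (by omega) hc
  have hζ0 : ∀ k, c * ω ^ k ≠ 0 := fun k => norm_ne_zero_iff.1 (by rw [hζ]; exact one_ne_zero)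
  simp_rw [ofReal_fejerKernel (hζ _), ← zpow_natCast _ m, mul_assoc, ← zpow_add₀ (hζ0 _), sum_mul,
    ← zpow_add₀ (hζ0 _), ← mul_assoc]
  rw [sum_comm]
  calc ∑ j ∈ range n, ∑ k ∈ range (2 * n), ∑ l ∈ range n,
        (c * ω ^ k) ^ ((j : ℤ) - l + (-n + m))
      = ∑ j ∈ range n, ∑ l ∈ range n, if j + m = l + n then ((2 * n : ℕ) : ℂ) else 0 := by
        refine sum_congr rfl fun j hj => sum_comm.trans (sum_congr rfl fun l hl => ?_)
        simp only [mem_range] at hj hl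
        rw [hω.sum_mul_pow_zpow c (abs_lt.2 ⟨by omega, by omega⟩)]
        congr 1
        apply propext; omega
    _ = 2 * n * m := by
        rw [sum_range_sum_range_ite_add_eq hm, nsmul_eq_mul]; push_cast; ring

lemma derivative_eval_one_eq_sum {Q : ℂ[X]} {n : ℕ} (hQ : Q.natDegree ≤ n) :
    (derivative Q).eval 1 = ∑ m ∈ range (n + 1), Q.coeff m * m := by
  rw [derivative_eval, sum_over_range' (S := ℂ) _ (fun _ => by simp) _ (Nat.lt_succ_of_le hQ)]
  simp

theorem two_mul_derivative_eval_one_eq_sum_fejerKernel {n : ℕ} {ω : ℂ}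
    (hω : IsPrimitiveRoot ω (2 * n)) {c : ℂ} (hc : ‖c‖ = 1) {Q : ℂ[X]} (hQ : Q.natDegree ≤ n) :
    2 * n * (derivative Q).eval 1 = ∑ k ∈ range (2 * n),
      fejerKernel n (c * ω ^ k) * (c * ω ^ k) ^ (-(n : ℤ)) * Q.eval (c * ω ^ k) := by
  simp_rw [eval_eq_sum_range' (Nat.lt_succ_of_le hQ), mul_sum, derivative_eval_one_eq_sum hQ]
  rw [mul_sum, sum_comm]
  refine sum_congr rfl fun m hm => ?_
  rw [mul_left_comm, ← sum_fejerKernel_mul_zpow_mul_pow hω hc (Nat.le_of_lt_succ (mem_range.1 hm)),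
    mul_sum]
  exact sum_congr rfl fun k _ => by ring

lemma norm_eval_le_Malpha (P : ℂ[X]) {n : ℕ} (hn : 1 ≤ n) (β : ℝ) {k : ℕ} (hk : k < n) :
    ‖P.eval (Complex.exp (Complex.I * ((β + 2 * k * Real.pi) / n)))‖ ≤ Malpha P n β := by
  apply le_csSup ((Set.finite_Icc 1 n).image _).bddAbove
  rcases Nat.eq_zero_or_pos k with rfl | hk0
  · refine ⟨n, ⟨hn, le_rfl⟩, ?_⟩
    have hn0 : (n : ℂ) ≠ 0 := Nat.cast_ne_zero.2 (by omega)
    dsimp only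
    congr 2
    rw [Complex.exp_eq_exp_iff_exists_int]
    exact ⟨1, by field_simp; push_cast; ring⟩
  · exact ⟨k, ⟨hk0, hk.le⟩, rfl⟩

open Complex in
lemma norm_derivative_eval_le {P : ℂ[X]} {n : ℕ} (hn : 1 ≤ n) (hP : P.natDegree ≤ n) (α : ℝ)
    {z : ℂ} (hz : ‖z‖ = 1) :
    ‖(derivative P).eval z‖ ≤ n / 2 * (Malpha P n α + Malpha P n (α + Real.pi)) := by
  have hz0 : z ≠ 0 := norm_ne_zero_iff.1 (by rw [hz]; exact one_ne_zero)
  set Q := P.comp (C z * X)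
  have hQ : Q.natDegree ≤ n :=
    natDegree_comp_le.trans (by rw [natDegree_C_mul_X z hz0, mul_one]; exact hP)
  have hQ' : (derivative Q).eval 1 = z * (derivative P).eval z := by
    simp [Q, derivative_comp]
  set ω := exp (2 * Real.pi * I / (2 * n : ℕ))
  have hω : IsPrimitiveRoot ω (2 * n) := isPrimitiveRoot_exp _ (by omega)
  have hω2 : IsPrimitiveRoot (ω ^ 2) n := hω.pow (by omega) rfl
  set c := exp (I * (α / n)) / z
  have hc : ‖c‖ = 1 := by
    rw [norm_div, hz, div_one, mul_comm, ← ofReal_natCast, ← ofReal_div, norm_exp_ofReal_mul_I]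
  have hcω : ‖c * ω‖ = 1 := by simpa using hω.norm_mul_pow_eq_one (by omega) hc 1
  have hnode : ∀ k : ℕ, Q.eval (c * ω ^ k) = P.eval (exp (I * ((α + k * Real.pi) / n))) := by
    intro k
    simp only [Q, eval_comp, eval_mul, eval_C, eval_X, c, ω, ← exp_nat_mul]
    rw [← mul_assoc, mul_div_cancel₀ _ hz0, ← exp_add]
    congr 2
    push_cast
    field_simp
  have hnode_even : ∀ l : ℕ, Q.eval (c * (ω ^ 2) ^ l)
      = P.eval (exp (I * ((α + 2 * l * Real.pi) / n))) := fun l => by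
    rw [← pow_mul, hnode]; push_cast; ring_nf
  have hnode_odd : ∀ l : ℕ, Q.eval (c * ω * (ω ^ 2) ^ l)
      = P.eval (exp (I * (((α + Real.pi : ℝ) + 2 * l * Real.pi) / n))) := fun l => by
    rw [mul_assoc, ← pow_mul, ← pow_succ', hnode]; push_cast; ring_nf
  have hbound : 2 * n * ‖(derivative P).eval z‖
      ≤ n ^ 2 * Malpha P n α + n ^ 2 * Malpha P n (α + Real.pi) := calc
    2 * n * ‖(derivative P).eval z‖ = ‖2 * n * (derivative Q).eval 1‖ := by
      rw [hQ', norm_mul, norm_mul, norm_mul, hz, one_mul]; norm_cast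
    _ ≤ ∑ k ∈ range (2 * n), fejerKernel n (c * ω ^ k) * ‖Q.eval (c * ω ^ k)‖ := by
      rw [two_mul_derivative_eval_one_eq_sum_fejerKernel hω hc hQ]
      refine (norm_sum_le _ _).trans_eq (sum_congr rfl fun k _ => ?_)
      rw [norm_mul, norm_mul, norm_zpow, hω.norm_mul_pow_eq_one (by omega) hc, one_zpow, mul_one,
        norm_real, Real.norm_of_nonneg (fejerKernel_nonneg _ _)]
    _ = ∑ l ∈ range n, fejerKernel n (c * (ω ^ 2) ^ l) * ‖Q.eval (c * (ω ^ 2) ^ l)‖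
        + ∑ l ∈ range n, fejerKernel n (c * ω * (ω ^ 2) ^ l) * ‖Q.eval (c * ω * (ω ^ 2) ^ l)‖ := by
      have hodd : ∀ k : ℕ, c * ω ^ (2 * k + 1) = c * ω * (ω ^ 2) ^ k := fun k => by ring
      simp_rw [Finset.sum_range_two_mul, hodd, pow_mul]
    _ ≤ n ^ 2 * Malpha P n α + n ^ 2 * Malpha P n (α + Real.pi) := by
      simp_rw [hnode_even, hnode_odd]
      exact add_le_add (sum_fejerKernel_mul_le hω2 hc fun l hl => norm_eval_le_Malpha P hn α hl)
        (sum_fejerKernel_mul_le hω2 hcω fun l hl => norm_eval_le_Malpha P hn (α + Real.pi) hl)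
  have hn' : (0 : ℝ) < n := by exact_mod_cast hn
  rw [div_mul_eq_mul_div, le_div_iff₀ two_pos]
  nlinarith

theorem stmt_2 (n : ℕ) (hn : 1 ≤ n) (P : Polynomial ℂ) (hdeg : P.natDegree = n) (α : ℝ) :
    maxSphere (derivative P) 1 ≤ (n / 2) * (Malpha P n α + Malpha P n (α + Real.pi)) := by
  refine csSup_le ⟨_, 1, by simp, rfl⟩ ?_
  rintro _ ⟨z, hz, rfl⟩
  exact norm_derivative_eval_le hn hdeg.le α (by simpa using hz)
end

section
/- If P(z) is a complex polynomial of degree n having no zeros in |z| < 1, then max_{|z|=1} |P'(z)| ≤ (n/2) · max_{|z|=1} |P(z)|. -/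
open Polynomial

/-! Lax's argument. If `P` has no zeros in the open unit disc, each zero `r` has `‖r‖ ≥ 1`, so
`Re (z / (z - r)) ≤ 1 / 2` for `‖z‖ = 1`; summing over the zeros gives `Re (z P'(z) / P(z)) ≤ n / 2`,
which is `‖P'(z)‖ ≤ ‖n P(z) - z P'(z)‖`. With `M` the maximum of `‖P‖` on the circle, the same bound
holds for `P - μ` whenever `‖μ‖ > M`, since by the maximum modulus principle `P - μ` has no zeros in
the disc. Aligning `n μ` with `n P(z) - z P'(z)` turns this into `‖P'(z)‖ ≤ |g - n t|` for
`g = ‖n P(z) - z P'(z)‖` and all `t > M`, so `‖P'(z)‖ + g ≤ n M` (or `P'(z) = 0`); together with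
`‖P'(z)‖ ≤ g` this is `‖P'(z)‖ ≤ n M / 2`. -/

theorem Complex.norm_le_norm_ofReal_sub_iff (c : ℝ) (w : ℂ) :
    ‖w‖ ≤ ‖(c : ℂ) - w‖ ↔ 2 * c * w.re ≤ c ^ 2 := by
  rw [← sq_le_sq₀ (norm_nonneg _) (norm_nonneg _), Complex.sq_norm, Complex.sq_norm,
    Complex.normSq_apply, Complex.normSq_apply]
  simp only [sub_re, sub_im, ofReal_re, ofReal_im]
  constructor <;> intro h <;> linarith

theorem Complex.re_div_sub_le_half {z r : ℂ} (hzr : ‖z‖ ≤ ‖r‖) : (z / (z - r)).re ≤ 1 / 2 := by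
  rcases eq_or_ne z r with rfl | hne
  · norm_num -- `z / 0 = 0`
  have hsub : z - r ≠ 0 := sub_ne_zero.mpr hne
  have hone_sub : (1 : ℂ) - z / (z - r) = -r / (z - r) := by field_simp; ring
  have key : ‖z / (z - r)‖ ≤ ‖((1 : ℝ) : ℂ) - z / (z - r)‖ := by
    rw [ofReal_one, hone_sub, norm_div, norm_div, norm_neg]
    gcongr
  rw [norm_le_norm_ofReal_sub_iff] at key
  linarith

theorem Polynomial.re_mul_eval_derivative_div_eval_le (P : ℂ[X]) {z : ℂ} (hPz : P.eval z ≠ 0)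
    (hroots : ∀ r ∈ P.roots, ‖z‖ ≤ ‖r‖) :
    (z * P.derivative.eval z / P.eval z).re ≤ P.natDegree / 2 := by
  have hsplit := IsAlgClosed.splits P
  rw [mul_div_assoc, hsplit.eval_derivative_div_eval_of_ne_zero hPz, ← Multiset.sum_map_mul_left,
    hsplit.natDegree_eq_card_roots, ← Complex.coe_reAddGroupHom, map_multiset_sum, Multiset.map_map]
  refine (Multiset.sum_le_card_nsmul _ (1 / 2) fun x hx => ?_).trans_eq (by simp [div_eq_mul_inv])
  obtain ⟨r, hr, rfl⟩ := Multiset.mem_map.mp hx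
  simpa only [Function.comp_apply, Complex.coe_reAddGroupHom, mul_one_div] using
    Complex.re_div_sub_le_half (hroots r hr)

theorem Polynomial.norm_eval_derivative_le_norm_natDegree_mul_sub (P : ℂ[X]) {z : ℂ} (hz : ‖z‖ = 1)
    (hP : ∀ w : ℂ, ‖w‖ < 1 → P.eval w ≠ 0) :
    ‖P.derivative.eval z‖ ≤ ‖(P.natDegree : ℂ) * P.eval z - z * P.derivative.eval z‖ := by
  by_cases hPz : P.eval z = 0
  · simp [hPz, hz]
  have hP0 : P ≠ 0 := fun h => hPz (by simp [h])
  have hroots : ∀ r ∈ P.roots, ‖z‖ ≤ ‖r‖ := fun r hr =>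
    hz ▸ not_lt.mp fun h => hP r h ((mem_roots hP0).mp hr)
  set w := z * P.derivative.eval z / P.eval z with hw
  have hnorm : ‖w‖ ≤ ‖((P.natDegree : ℝ) : ℂ) - w‖ := by
    rw [Complex.norm_le_norm_ofReal_sub_iff]
    nlinarith [P.re_mul_eval_derivative_div_eval_le hPz hroots, (P.natDegree.cast_nonneg : (0 : ℝ) ≤ _)]
  rw [Complex.ofReal_natCast] at hnorm
  calc ‖P.derivative.eval z‖ = ‖w‖ * ‖P.eval z‖ := by
        rw [hw, norm_div, norm_mul, hz, one_mul, div_mul_cancel₀ _ (norm_ne_zero_iff.mpr hPz)]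
    _ ≤ ‖(P.natDegree : ℂ) - w‖ * ‖P.eval z‖ := by gcongr
    _ = ‖(P.natDegree : ℂ) * P.eval z - z * P.derivative.eval z‖ := by
        rw [← norm_mul, sub_mul, hw, div_mul_cancel₀ _ hPz]

theorem Polynomial.norm_eval_le_maxSphere_s4 (P : ℂ[X]) {r : ℝ} {z : ℂ} (hz : ‖z‖ = r) :
    ‖P.eval z‖ ≤ maxSphere P r := by
  have hbdd : BddAbove ((fun z => ‖P.eval z‖) '' Metric.sphere (0 : ℂ) r) :=
    ((isCompact_sphere 0 r).image (by fun_prop)).bddAbove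
  exact le_csSup hbdd ⟨z, by simpa using hz, rfl⟩

theorem Polynomial.maxSphere_nonneg (P : ℂ[X]) {r : ℝ} (hr : 0 ≤ r) : 0 ≤ maxSphere P r :=
  (norm_nonneg _).trans (P.norm_eval_le_maxSphere_s4 (z := r) (by simp [abs_of_nonneg hr]))

theorem Polynomial.maxSphere_le (P : ℂ[X]) {r B : ℝ} (hr : 0 ≤ r)
    (h : ∀ z : ℂ, ‖z‖ = r → ‖P.eval z‖ ≤ B) : maxSphere P r ≤ B := by
  refine csSup_le ((NormedSpace.sphere_nonempty.mpr hr).image _) ?_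
  rintro _ ⟨z, hz, rfl⟩
  exact h z (by simpa using hz)

theorem Polynomial.norm_eval_le_maxSphere_of_norm_le (P : ℂ[X]) {r : ℝ} (hr : 0 < r) {z : ℂ}
    (hz : ‖z‖ ≤ r) : ‖P.eval z‖ ≤ maxSphere P r := by
  have hfr : ∀ w ∈ frontier (Metric.ball (0 : ℂ) r), ‖P.eval w‖ ≤ maxSphere P r := by
    intro w hw
    rw [frontier_ball 0 hr.ne'] at hw
    exact P.norm_eval_le_maxSphere_s4 (by simpa using hw)
  exact Complex.norm_le_of_forall_mem_frontier_norm_le Metric.isBounded_ball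
    P.differentiable.diffContOnCl hfr (by rw [closure_ball 0 hr.ne']; simpa using hz)

theorem Complex.exists_norm_eq_norm_sub_mul_eq (G : ℂ) (c : ℝ) {t : ℝ} (ht : 0 ≤ t) :
    ∃ μ : ℂ, ‖μ‖ = t ∧ ‖G - c * μ‖ = |‖G‖ - c * t| := by
  refine ⟨t * exp (G.arg * I), by simp [ht], ?_⟩
  nth_rewrite 1 [← norm_mul_exp_arg_mul_I G]
  rw [← mul_assoc, ← sub_mul, norm_mul, norm_exp_ofReal_mul_I, mul_one]
  norm_cast

theorem le_half_mul_of_forall_lt_le_abs_sub {p g c M : ℝ} (hc : 0 < c) (hM : 0 ≤ M) (hpg : p ≤ g)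
    (h : ∀ t, M < t → p ≤ |g - c * t|) : p ≤ c / 2 * M := by
  rcases lt_or_ge (c * M) g with hgM | hgM
  · have := h (g / c) (by rwa [lt_div_iff₀' hc])
    rw [mul_div_cancel₀ _ hc.ne', sub_self, abs_zero] at this
    linarith [mul_nonneg hc.le hM]
  · have hsum : (p + g) / c ≤ M := le_of_forall_gt_imp_ge_of_dense fun t ht => by
      have := h t ht
      rw [abs_of_nonpos (by nlinarith)] at this
      rw [div_le_iff₀' hc]
      linarith
    rw [div_le_iff₀' hc] at hsum
    linarith

theorem Polynomial.norm_eval_derivative_le_abs_sub (P : ℂ[X]) {z : ℂ} (hz : ‖z‖ = 1) {t : ℝ}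
    (ht : maxSphere P 1 < t) :
    ‖P.derivative.eval z‖ ≤
      |‖(P.natDegree : ℂ) * P.eval z - z * P.derivative.eval z‖ - P.natDegree * t| := by
  obtain ⟨μ, hμ, hsub⟩ := Complex.exists_norm_eq_norm_sub_mul_eq
    ((P.natDegree : ℂ) * P.eval z - z * P.derivative.eval z) P.natDegree
    ((P.maxSphere_nonneg zero_le_one).trans ht.le)
  have hzero : ∀ w : ℂ, ‖w‖ < 1 → (P - C μ).eval w ≠ 0 := fun w hw hPw => by
    rw [eval_sub, eval_C, sub_eq_zero] at hPw
    have := P.norm_eval_le_maxSphere_of_norm_le one_pos hw.le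
    rw [hPw, hμ] at this
    linarith
  have := (P - C μ).norm_eval_derivative_le_norm_natDegree_mul_sub hz hzero
  rw [natDegree_sub_C, derivative_sub, derivative_C, sub_zero, eval_sub, eval_C, mul_sub,
    sub_right_comm] at this
  rwa [← hsub, Complex.ofReal_natCast]

theorem stmt_4 (n : ℕ) (hn : 1 ≤ n) (P : Polynomial ℂ) (hdeg : P.natDegree = n)
    (hzero : ∀ z : ℂ, ‖z‖ < 1 → P.eval z ≠ 0) :
    maxSphere (derivative P) 1 ≤ (n / 2) * maxSphere P 1 := by
  subst hdeg
  refine (derivative P).maxSphere_le zero_le_one fun z hz => ?_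
  exact le_half_mul_of_forall_lt_le_abs_sub (by exact_mod_cast hn) (P.maxSphere_nonneg zero_le_one)
    (P.norm_eval_derivative_le_norm_natDegree_mul_sub hz hzero)
    fun t ht => P.norm_eval_derivative_le_abs_sub hz ht
end

section
/- If P(z) is a polynomial of degree n and Q(z) = z^n · conj(P(1/conj(z))), then for all z with |z| = 1, |P'(z)| + |Q'(z)| ≤ n · max_{|z|=1}|P(z)|. -/
open Polynomial

/-!
Write `G = z ^ n * conj (F (1 / conj z))` for a polynomial `F` of degree at most `n`.
If `F` has no zeros in the closed unit disk, then `|G| ≤ |F|` there (maximum modulus applied to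
`G / F`, as `|G| = |F|` on the circle). So for `|μ| > 1` the polynomial `G - conj μ • F` has no
zeros in the closed disk, its reflection `F - μ • G` has all its zeros in the open disk, and by
Gauss–Lucas `F' - μ • G'` does not vanish on the circle; hence `|F'| ≤ |G'|` on the circle.

Apply this to `F = P - a` with `|a| > M = max_{|z|=1} |P|`, whose reflection is
`Q - conj a • z ^ n`, with the argument of `a` chosen so that
`|Q'(z) - conj a • n z ^ (n-1)| = n |a| - |Q'(z)|`. This gives `|P'(z)| + |Q'(z)| ≤ n |a|` whenever
`n |a| > |Q'(z)|`, that is `|P'(z)| + |Q'(z)| ≤ max (n M) |Q'(z)|`. The same bound with `P` and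
`Q` exchanged rules out `|Q'(z)| > n M`.
-/

open ComplexConjugate Metric

noncomputable def conjReflect (n : ℕ) (F : ℂ[X]) : ℂ[X] := (F.map (starRingEnd ℂ)).reflect n

section conjReflect

variable {n : ℕ} {F : ℂ[X]}

theorem conjReflect_sub_C_mul (G : ℂ[X]) (a : ℂ) :
    conjReflect n (F - C a * G) = conjReflect n F - C (conj a) * conjReflect n G := by
  simp only [conjReflect, Polynomial.map_sub, Polynomial.map_mul, map_C, reflect_sub,
    reflect_C_mul]

theorem conjReflect_sub_C (a : ℂ) :
    conjReflect n (F - C a) = conjReflect n F - C (conj a) * X ^ n := by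
  simp only [conjReflect, Polynomial.map_sub, map_C, reflect_sub, reflect_C]

@[simp]
theorem conjReflect_conjReflect : conjReflect n (conjReflect n F) = F := by
  simp [conjReflect, ← reflect_map, Polynomial.map_map]

theorem natDegree_conjReflect_le (hF : F.natDegree ≤ n) : (conjReflect n F).natDegree ≤ n :=
  natDegree_reflect_le.trans (max_le le_rfl (natDegree_map_le.trans hF))

theorem coeff_conjReflect_self : (conjReflect n F).coeff n = conj (F.coeff 0) := by
  simp [conjReflect, coeff_reflect]

theorem eval_conjReflect (hF : F.natDegree ≤ n) {z : ℂ} (hz : z ≠ 0) :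
    (conjReflect n F).eval z = z ^ n * conj (F.eval (1 / conj z)) := by
  have : Invertible z⁻¹ := invertibleOfNonzero (inv_ne_zero hz)
  have h := eval₂_reflect_mul_pow (RingHom.id ℂ) z⁻¹ n (F.map (starRingEnd ℂ))
    (natDegree_map_le.trans hF)
  rw [invOf_eq_inv, inv_inv, ← eval, ← eval, eval_map] at h
  have hconj : conj (F.eval (1 / conj z)) = F.eval₂ (starRingEnd ℂ) z⁻¹ := by
    rw [eval, hom_eval₂, RingHom.comp_id]
    simp
  rw [conjReflect, hconj, ← h, inv_pow, mul_comm _ (z ^ n)⁻¹,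
    mul_inv_cancel_left₀ (pow_ne_zero n hz)]

theorem eq_conjReflect_of_forall_eval_eq (hF : F.natDegree ≤ n) {G : ℂ[X]}
    (hG : ∀ z : ℂ, z ≠ 0 → G.eval z = z ^ n * conj (F.eval (1 / conj z))) :
    G = conjReflect n F := by
  refine eq_of_infinite_eval_eq _ _ ((Set.finite_singleton (0 : ℂ)).infinite_compl.mono ?_)
  intro z hz
  simp only [Set.mem_ofPred_eq, hG z hz, eval_conjReflect hF hz]

theorem norm_eval_conjReflect_of_norm_eq_one (hF : F.natDegree ≤ n) {z : ℂ} (hz : ‖z‖ = 1) :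
    ‖(conjReflect n F).eval z‖ = ‖F.eval z‖ := by
  rw [eval_conjReflect hF (norm_ne_zero_iff.1 (hz.trans_ne one_ne_zero)),
    ← Complex.inv_eq_conj hz, one_div, inv_inv, norm_mul, norm_pow, hz, one_pow, one_mul,
    Complex.norm_conj]

theorem conjReflect_eval_ne_zero (hF : F.natDegree ≤ n)
    (hF0 : ∀ w ∈ closedBall (0 : ℂ) 1, F.eval w ≠ 0) {z : ℂ} (hz : 1 ≤ ‖z‖) :
    (conjReflect n F).eval z ≠ 0 := by
  have hz0 : z ≠ 0 := norm_pos_iff.1 (zero_lt_one.trans_le hz)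
  rw [eval_conjReflect hF hz0]
  refine mul_ne_zero (pow_ne_zero n hz0) ((_root_.map_ne_zero _).2 (hF0 _ ?_))
  rw [mem_closedBall_zero_iff, norm_div, norm_one, Complex.norm_conj]
  exact div_le_one_of_le₀ hz (norm_nonneg z)

end conjReflect

theorem norm_le_norm_of_forall_mem_frontier {E : Type*} [NormedAddCommGroup E]
    [NormedSpace ℂ E] [Nontrivial E] {U : Set E} (hU : Bornology.IsBounded U) {f g : E → ℂ}
    (hf : DiffContOnCl ℂ f U) (hg : DiffContOnCl ℂ g U) (hg0 : ∀ z ∈ closure U, g z ≠ 0)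
    (hfg : ∀ z ∈ frontier U, ‖f z‖ ≤ ‖g z‖) {z : E} (hz : z ∈ closure U) : ‖f z‖ ≤ ‖g z‖ := by
  have hquot : ∀ w, ‖g⁻¹ w • f w‖ = ‖f w‖ / ‖g w‖ := fun w => by
    rw [Pi.inv_apply, norm_smul, norm_inv, inv_mul_eq_div]
  have h := Complex.norm_le_of_forall_mem_frontier_norm_le hU ((hg.inv hg0).smul hf) (C := 1)
    (fun w hw => by
      rw [hquot]
      exact div_le_one_of_le₀ (hfg w hw) (norm_nonneg _)) hz
  rwa [hquot, div_le_one (norm_pos_iff.2 (hg0 z hz))] at h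

theorem norm_eval_le_of_forall_norm_eq_one (F : ℂ[X]) {M : ℝ}
    (hM : ∀ w : ℂ, ‖w‖ = 1 → ‖F.eval w‖ ≤ M) {w : ℂ} (hw : w ∈ closedBall (0 : ℂ) 1) :
    ‖F.eval w‖ ≤ M := by
  rw [← closure_ball (0 : ℂ) one_ne_zero] at hw
  refine Complex.norm_le_of_forall_mem_frontier_norm_le isBounded_ball
    F.differentiable.diffContOnCl (fun v hv => hM v ?_) hw
  rwa [frontier_ball (0 : ℂ) one_ne_zero, mem_sphere_zero_iff_norm] at hv

theorem eval_derivative_ne_zero_of_roots_subset {S : ℂ[X]} (hS : 0 < S.degree) {K : Set ℂ}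
    (hK : Convex ℝ K) (hroots : ∀ w, S.eval w = 0 → w ∈ K) {z : ℂ} (hz : z ∉ K) :
    (derivative S).eval z ≠ 0 := by
  intro h
  have hS0 : S ≠ 0 := ne_zero_of_degree_gt hS
  have hS' : derivative S ≠ 0 := by
    rw [Ne, derivative_eq_zero]
    exact (natDegree_pos_iff_degree_pos.2 hS).ne'
  apply hz
  refine convexHull_min (fun w hw => hroots w ?_) hK
    (rootSet_derivative_subset_convexHull_rootSet hS ?_)
  · simpa [mem_rootSet, hS0] using hw
  · simpa [mem_rootSet, hS'] using h

section zeroFree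

variable {n : ℕ} {F : ℂ[X]} (hF : F.natDegree ≤ n)
  (hF0 : ∀ w ∈ closedBall (0 : ℂ) 1, F.eval w ≠ 0)
include hF hF0

theorem norm_eval_conjReflect_le {w : ℂ} (hw : w ∈ closedBall (0 : ℂ) 1) :
    ‖(conjReflect n F).eval w‖ ≤ ‖F.eval w‖ := by
  rw [← closure_ball (0 : ℂ) one_ne_zero] at hw hF0
  refine norm_le_norm_of_forall_mem_frontier isBounded_ball
    (conjReflect n F).differentiable.diffContOnCl F.differentiable.diffContOnCl hF0
    (fun v hv => ?_) hw
  rw [frontier_ball (0 : ℂ) one_ne_zero, mem_sphere_zero_iff_norm] at hv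
  exact (norm_eval_conjReflect_of_norm_eq_one hF hv).le

theorem eval_derivative_ne_mul_conjReflect (hn : 1 ≤ n) {μ : ℂ} (hμ : 1 < ‖μ‖) {z : ℂ}
    (hz : ‖z‖ = 1) : (derivative F).eval z ≠ μ * (derivative (conjReflect n F)).eval z := by
  set G := conjReflect n F
  set T := G - C (conj μ) * F
  have hT0 : ∀ w ∈ closedBall (0 : ℂ) 1, T.eval w ≠ 0 := by
    intro w hw h
    rw [eval_sub, eval_mul, eval_C, sub_eq_zero] at h
    have hFw := norm_pos_iff.2 (hF0 w hw)
    have hGw := norm_eval_conjReflect_le hF hF0 hw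
    rw [h, norm_mul, Complex.norm_conj] at hGw
    nlinarith
  have hT : T.natDegree ≤ n :=
    (natDegree_sub_le_of_le (natDegree_conjReflect_le hF) ((natDegree_C_mul_le _ _).trans hF)).trans
      (max_self n).le
  have hS : conjReflect n T = F - C μ * G := by
    simp only [T, G, conjReflect_sub_C_mul, conjReflect_conjReflect, Complex.conj_conj]
  have hSdeg : 0 < (conjReflect n T).degree := by
    have hcoeff : (conjReflect n T).coeff n ≠ 0 := by
      rw [coeff_conjReflect_self, _root_.map_ne_zero, coeff_zero_eq_eval_zero]
      exact hT0 0 (mem_closedBall_self zero_le_one)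
    exact natDegree_pos_iff_degree_pos.1 (hn.trans (le_natDegree_of_ne_zero hcoeff))
  have hS' := eval_derivative_ne_zero_of_roots_subset hSdeg (convex_ball 0 1)
    (fun w hw => by
      by_contra hw'
      rw [mem_ball_zero_iff, not_lt] at hw'
      exact conjReflect_eval_ne_zero hT hT0 hw' hw)
    (z := z) (by simp [hz])
  intro h
  rw [hS, derivative_sub, derivative_C_mul, eval_sub, eval_mul, eval_C, h, sub_self] at hS'
  exact hS' rfl

theorem norm_eval_derivative_le_conjReflect (hn : 1 ≤ n) {z : ℂ} (hz : ‖z‖ = 1)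
    (hG : (derivative (conjReflect n F)).eval z ≠ 0) :
    ‖(derivative F).eval z‖ ≤ ‖(derivative (conjReflect n F)).eval z‖ := by
  by_contra h
  refine eval_derivative_ne_mul_conjReflect hF hF0 hn ?_ hz (div_mul_cancel₀ _ hG).symm
  rwa [norm_div, one_lt_div (norm_pos_iff.2 hG), ← not_le]

end zeroFree

theorem norm_eval_derivative_add_le_max {n : ℕ} {F : ℂ[X]} (hn : 1 ≤ n)
    (hF : F.natDegree ≤ n) {M : ℝ} (hM : ∀ w : ℂ, ‖w‖ = 1 → ‖F.eval w‖ ≤ M) {z : ℂ}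
    (hz : ‖z‖ = 1) :
    ‖(derivative F).eval z‖ + ‖(derivative (conjReflect n F)).eval z‖ ≤
      max (n * M) ‖(derivative (conjReflect n F)).eval z‖ := by
  refine le_of_forall_gt_imp_ge_of_dense fun t ht => ?_
  obtain ⟨htM, htb⟩ := max_lt_iff.1 ht
  set b := (derivative (conjReflect n F)).eval z
  set u := Complex.exp (b.arg * Complex.I)
  have hu : ‖u‖ = 1 := Complex.norm_exp_ofReal_mul_I _
  have hn0 : (0 : ℝ) < n := by exact_mod_cast hn
  -- `conj a * (n * z ^ (n - 1)) = t * u`, the point of norm `t` in the direction of `b`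
  set a : ℂ := (t / n : ℝ) * conj u * z ^ (n - 1)
  have ha : ‖a‖ = t / n := by
    rw [norm_mul, norm_mul, Complex.norm_real, Complex.norm_conj, hu, norm_pow, hz, one_pow,
      mul_one, mul_one, Real.norm_of_nonneg (div_nonneg (by linarith [norm_nonneg b]) hn0.le)]
  have hMa : M < ‖a‖ := by rwa [ha, lt_div_iff₀ hn0, mul_comm]
  have hFa : ∀ w ∈ closedBall (0 : ℂ) 1, (F - C a).eval w ≠ 0 := by
    intro w hw h
    rw [eval_sub, eval_C, sub_eq_zero] at h
    have := norm_eval_le_of_forall_norm_eq_one F hM hw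
    rw [h] at this
    linarith
  have hderiv : (derivative (conjReflect n (F - C a))).eval z = ((‖b‖ - t : ℝ) : ℂ) * u := by
    have hzz : conj z ^ (n - 1) * z ^ (n - 1) = 1 := by
      rw [← mul_pow, Complex.conj_mul', hz]
      simp
    have hb : b = ‖b‖ * u := (Complex.norm_mul_exp_arg_mul_I b).symm
    have : (n : ℂ) ≠ 0 := by exact_mod_cast hn0.ne'
    rw [conjReflect_sub_C, derivative_sub, derivative_C_mul_X_pow, eval_sub, eval_mul, eval_C,
      eval_pow, eval_X]
    simp only [a, map_mul, Complex.conj_ofReal, Complex.conj_conj, map_pow]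
    push_cast
    field_simp
    linear_combination hb + (-(t : ℂ) * u) * hzz
  have key := norm_eval_derivative_le_conjReflect ((natDegree_sub_C).trans_le hF) hFa hn hz
    (by
      rw [hderiv]
      exact mul_ne_zero (by exact_mod_cast (sub_neg.2 htb).ne) (norm_ne_zero_iff.1 (by simp [hu])))
  rw [hderiv, derivative_sub, derivative_C, sub_zero, norm_mul, hu, mul_one, Complex.norm_real,
    Real.norm_of_nonpos (by linarith)] at key
  linarith

theorem stmt_14 (n : ℕ) (hn : 1 ≤ n) (P Q : Polynomial ℂ) (hdeg : P.natDegree = n)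
    (hQ : ∀ z : ℂ, z ≠ 0 →
      Q.eval z = z ^ n * (starRingEnd ℂ) (P.eval (1 / (starRingEnd ℂ) z))) :
    ∀ z : ℂ, ‖z‖ = 1 →
      ‖(derivative P).eval z‖ + ‖(derivative Q).eval z‖ ≤
        n * maxSphere P 1 := by
  intro z hz
  have hP : P.natDegree ≤ n := hdeg.le
  obtain rfl := eq_conjReflect_of_forall_eval_eq hP hQ
  have hPM : ∀ w : ℂ, ‖w‖ = 1 → ‖P.eval w‖ ≤ maxSphere P 1 := fun w hw =>
    le_csSup ((isCompact_sphere 0 1).bddAbove_image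
      (continuous_norm.comp P.continuous).continuousOn) ⟨w, mem_sphere_zero_iff_norm.2 hw, rfl⟩
  have hQM : ∀ w : ℂ, ‖w‖ = 1 → ‖(conjReflect n P).eval w‖ ≤ maxSphere P 1 := fun w hw =>
    (norm_eval_conjReflect_of_norm_eq_one hP hw).trans_le (hPM w hw)
  have hM : 0 ≤ (n : ℝ) * maxSphere P 1 :=
    mul_nonneg n.cast_nonneg ((norm_nonneg _).trans (hPM 1 norm_one))
  have hPQ := norm_eval_derivative_add_le_max hn hP hPM hz
  have hQP := norm_eval_derivative_add_le_max hn (natDegree_conjReflect_le hP) hQM hz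
  rw [conjReflect_conjReflect] at hQP
  rcases max_cases ((n : ℝ) * maxSphere P 1) ‖(derivative (conjReflect n P)).eval z‖ with h | h <;>
  rcases max_cases ((n : ℝ) * maxSphere P 1) ‖(derivative P).eval z‖ with h' | h' <;>
  linarith [norm_nonneg ((derivative P).eval z)]
end

section
/- If P(z) = Σ_{v=0}^{n} c_v z^v is a polynomial of degree n having no zeros in |z| < k for some k ≥ 1, then for each point z on |z| = 1 with P(z) ≠ 0, Re(z P'(z)/P(z)) ≤ (1/(1+k))·[ n − (|c₀| − k^n|c_n|)/(|c₀| + k^n|c_n|) ]. -/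
/-!
Over ℂ, `P = c_n ∏ (X - r)` with every root `|r| ≥ k`, so `z P'(z) / P(z) = ∑ z / (z - r)`,
and for `|z| = 1` each term has real part at most `1 / (1 + |r|)`. With `g s = (s - 1) / (s + 1)`
and `s = |r| / k ≥ 1` one has `1 / (1 + |r|) ≤ (1 - g s) / (1 + k)`, and `g (a b) ≤ g a + g b`
on `[1, ∞)`. Hence `∑ g (|r| / k) ≥ g (∏ |r| / k ^ n) = g (|c_0| / (k ^ n |c_n|))`.
-/

open Polynomial

lemma sub_one_div_add_one_mul_le {a b : ℝ} (ha : 1 ≤ a) (hb : 1 ≤ b) :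
    (a * b - 1) / (a * b + 1) ≤ (a - 1) / (a + 1) + (b - 1) / (b + 1) := by
  have hab : 1 ≤ a * b := one_le_mul_of_one_le_of_one_le ha hb
  rw [div_add_div _ _ (by positivity) (by positivity),
    div_le_div_iff₀ (by positivity) (by positivity)]
  nlinarith [mul_nonneg (mul_nonneg (sub_nonneg.2 ha) (sub_nonneg.2 hb)) (sub_nonneg.2 hab)]

lemma Multiset.sub_one_div_add_one_prod_le {s : Multiset ℝ} (hs : ∀ x ∈ s, 1 ≤ x) :
    (s.prod - 1) / (s.prod + 1) ≤ (s.map fun x => (x - 1) / (x + 1)).sum := by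
  induction s using Multiset.induction with
  | empty => simp
  | cons a s ih =>
    have hs' : ∀ x ∈ s, 1 ≤ x := fun x hx => hs x (Multiset.mem_cons_of_mem hx)
    rw [Multiset.prod_cons, Multiset.map_cons, Multiset.sum_cons]
    exact (sub_one_div_add_one_mul_le (hs a (Multiset.mem_cons_self a s))
      (Multiset.one_le_prod hs')).trans (add_le_add le_rfl (ih hs'))

lemma one_div_one_add_le_of_le {k t : ℝ} (hk : 1 ≤ k) (hkt : k ≤ t) :
    1 / (1 + t) ≤ 1 / (1 + k) * (1 - (t / k - 1) / (t / k + 1)) := by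
  have hk0 : 0 < k := by linarith
  have ht0 : 0 < t := by linarith
  have hquot : (t / k - 1) / (t / k + 1) = (t - k) / (t + k) := by field_simp
  rw [hquot, div_mul_eq_mul_div, one_mul, one_sub_div (by positivity), div_div,
    div_le_div_iff₀ (by positivity) (by positivity)]
  nlinarith [mul_nonneg (sub_nonneg.2 hk) (sub_nonneg.2 hkt)]

lemma Multiset.sum_one_div_one_add_le_of_le {s : Multiset ℝ} {k : ℝ} (hk : 1 ≤ k)
    (hs : ∀ t ∈ s, k ≤ t) :
    (s.map fun t => 1 / (1 + t)).sum ≤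
      1 / (1 + k) * (card s - (s.prod - k ^ card s) / (s.prod + k ^ card s)) := by
  have hk0 : 0 < k := by linarith
  have hquot : ∀ x ∈ s.map (· / k), 1 ≤ x := by
    simp only [Multiset.mem_map, forall_exists_index, and_imp, forall_apply_eq_imp_iff₂]
    exact fun t ht => (one_le_div hk0).2 (hs t ht)
  have hprod : (s.map (· / k)).prod = s.prod / k ^ card s := by
    rw [Multiset.prod_map_div, Multiset.map_id', Multiset.map_const', Multiset.prod_replicate]
  calc (s.map fun t => 1 / (1 + t)).sum
      ≤ (s.map fun t => 1 / (1 + k) * (1 - (t / k - 1) / (t / k + 1))).sum :=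
        Multiset.sum_map_le_sum_map _ _ fun t ht => one_div_one_add_le_of_le hk (hs t ht)
    _ = 1 / (1 + k) * (card s - ((s.map (· / k)).map fun x => (x - 1) / (x + 1)).sum) := by
        rw [Multiset.sum_map_mul_left, Multiset.sum_map_sub, Multiset.map_map]
        simp
    _ ≤ 1 / (1 + k) * (card s - ((s.map (· / k)).prod - 1) / ((s.map (· / k)).prod + 1)) := by
        gcongr
        exact Multiset.sub_one_div_add_one_prod_le hquot
    _ = 1 / (1 + k) * (card s - (s.prod - k ^ card s) / (s.prod + k ^ card s)) := by
        rw [hprod, div_sub_one (by positivity), div_add_one (by positivity),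
          div_div_div_cancel_right₀ (by positivity)]

lemma Complex.re_div_sub_le {z w : ℂ} (hz : ‖z‖ = 1) (hw : 1 ≤ ‖w‖) (hzw : z ≠ w) :
    (z / (z - w)).re ≤ 1 / (1 + ‖w‖) := by
  set a := (z * (starRingEnd ℂ) w).re
  have ha : -‖w‖ ≤ a := by
    have := Complex.abs_re_le_norm (z * (starRingEnd ℂ) w)
    rw [norm_mul, hz, Complex.norm_conj, one_mul] at this
    exact (abs_le.1 this).1
  have hnz : normSq z = 1 := by rw [Complex.normSq_eq_norm_sq, hz, one_pow]
  have hnw : normSq w = ‖w‖ ^ 2 := Complex.normSq_eq_norm_sq w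
  have hden : 0 < normSq (z - w) := Complex.normSq_pos.2 (sub_ne_zero.2 hzw)
  have hre : (z / (z - w)).re = (1 - a) / normSq (z - w) := by
    rw [div_eq_mul_inv, Complex.inv_def, ← mul_assoc, Complex.re_mul_ofReal, map_sub, mul_sub,
      Complex.sub_re, Complex.mul_conj, Complex.ofReal_re, hnz, div_eq_mul_inv]
  rw [hre, div_le_div_iff₀ hden (by positivity), Complex.normSq_sub, hnz, hnw]
  nlinarith [mul_nonneg (sub_nonneg.2 hw) (show 0 ≤ ‖w‖ + a by linarith)]

lemma Polynomial.re_mul_eval_derivative_div_eval_le_sum_roots {P : ℂ[X]} {z : ℂ}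
    (hz : ‖z‖ = 1) (hPz : P.eval z ≠ 0) (hroots : ∀ r ∈ P.roots, 1 ≤ ‖r‖) :
    (z * P.derivative.eval z / P.eval z).re ≤ (P.roots.map fun r => 1 / (1 + ‖r‖)).sum := by
  rw [mul_div_assoc, (IsAlgClosed.splits P).eval_derivative_div_eval_of_ne_zero hPz,
    ← Multiset.sum_map_mul_left, ← Complex.coe_reAddGroupHom, map_multiset_sum,
    Multiset.map_map]
  refine Multiset.sum_map_le_sum_map _ _ fun r hr => ?_
  have hzr : z ≠ r := fun h => hPz (h ▸ isRoot_of_mem_roots hr)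
  simpa only [Function.comp_apply, Complex.coe_reAddGroupHom, mul_one_div]
    using Complex.re_div_sub_le hz (hroots r hr) hzr

lemma Polynomial.norm_coeff_zero_eq_mul_prod_norm_roots {K : Type*} [NormedField K]
    [IsAlgClosed K] (P : K[X]) :
    ‖P.coeff 0‖ = ‖P.leadingCoeff‖ * (P.roots.map (‖·‖)).prod := by
  rw [(IsAlgClosed.splits P).coeff_zero_eq_leadingCoeff_mul_prod_roots, norm_mul, norm_mul,
    norm_pow, norm_neg, norm_one, one_pow, one_mul]
  exact congrArg _ (map_multiset_prod normHom P.roots)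

theorem Polynomial.re_mul_eval_derivative_div_eval_le_s17 {P : ℂ[X]} {k : ℝ} (hk : 1 ≤ k)
    (hzero : ∀ z : ℂ, ‖z‖ < k → P.eval z ≠ 0) {z : ℂ} (hz : ‖z‖ = 1)
    (hPz : P.eval z ≠ 0) :
    (z * P.derivative.eval z / P.eval z).re ≤
      1 / (1 + k) * (P.natDegree - (‖P.coeff 0‖ - k ^ P.natDegree * ‖P.leadingCoeff‖) /
        (‖P.coeff 0‖ + k ^ P.natDegree * ‖P.leadingCoeff‖)) := by
  have hroots : ∀ r ∈ P.roots, k ≤ ‖r‖ := fun r hr =>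
    not_lt.1 fun hlt => hzero r hlt (isRoot_of_mem_roots hr)
  have hnorms : ∀ t ∈ P.roots.map (‖·‖), k ≤ t := by
    simpa only [Multiset.mem_map, forall_exists_index, and_imp, forall_apply_eq_imp_iff₂]
      using hroots
  have hcard : Multiset.card (P.roots.map (‖·‖)) = P.natDegree := by
    rw [Multiset.card_map, (IsAlgClosed.splits P).natDegree_eq_card_roots]
  have hlc : 0 < ‖P.leadingCoeff‖ := by
    rw [norm_pos_iff, leadingCoeff_ne_zero]
    rintro rfl
    exact hPz eval_zero
  calc (z * P.derivative.eval z / P.eval z).re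
      ≤ (P.roots.map fun r => 1 / (1 + ‖r‖)).sum :=
        re_mul_eval_derivative_div_eval_le_sum_roots hz hPz fun r hr => hk.trans (hroots r hr)
    _ = ((P.roots.map (‖·‖)).map fun t => 1 / (1 + t)).sum := by rw [Multiset.map_map]; rfl
    _ ≤ _ := by
        refine (Multiset.sum_one_div_one_add_le_of_le hk hnorms).trans_eq ?_
        rw [hcard, norm_coeff_zero_eq_mul_prod_norm_roots, mul_comm (k ^ _), ← mul_sub,
          ← mul_add, mul_div_mul_left _ _ hlc.ne']

theorem stmt_17_general (n : ℕ) (c : ℕ → ℂ) (hc : c n ≠ 0)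
    (P : Polynomial ℂ)
    (hP : P = ∑ v ∈ Finset.range (n + 1), Polynomial.C (c v) * Polynomial.X ^ v)
    (k : ℝ) (hk : 1 ≤ k)
    (hzero : ∀ z : ℂ, ‖z‖ < k → P.eval z ≠ 0)
    (z : ℂ) (hz : ‖z‖ = 1) (hPz : P.eval z ≠ 0) :
    (z * (derivative P).eval z / P.eval z).re ≤
      (1 / (1 + k)) *
        ((n : ℝ) - (‖c 0‖ - k ^ n * ‖c n‖) /
          (‖c 0‖ + k ^ n * ‖c n‖)) := by
  have hcoeff : ∀ v ≤ n, P.coeff v = c v := fun v hv => by simp [hP, Nat.lt_succ_of_le hv]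
  have hdeg : P.natDegree = n := by
    refine natDegree_eq_of_le_of_coeff_ne_zero ?_ (hcoeff n le_rfl ▸ hc)
    rw [hP]
    exact natDegree_sum_le_of_forall_le _ _ fun v hv =>
      (natDegree_C_mul_X_pow_le _ _).trans (Finset.mem_range_succ_iff.1 hv)
  have hlc : P.leadingCoeff = c n := by rw [leadingCoeff, hdeg, hcoeff n le_rfl]
  simpa only [hdeg, hlc, hcoeff 0 (Nat.zero_le n)]
    using re_mul_eval_derivative_div_eval_le_s17 hk hzero hz hPz

theorem stmt_17 (n : ℕ) (hn : 1 ≤ n) (c : ℕ → ℂ) (hc : c n ≠ 0)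
    (P : Polynomial ℂ)
    (hP : P = ∑ v ∈ Finset.range (n + 1), Polynomial.C (c v) * Polynomial.X ^ v)
    (k : ℝ) (hk : 1 ≤ k)
    (hzero : ∀ z : ℂ, ‖z‖ < k → P.eval z ≠ 0)
    (z : ℂ) (hz : ‖z‖ = 1) (hPz : P.eval z ≠ 0) :
    (z * (derivative P).eval z / P.eval z).re ≤
      (1 / (1 + k)) *
        ((n : ℝ) - (‖c 0‖ - k ^ n * ‖c n‖) /
          (‖c 0‖ + k ^ n * ‖c n‖)) :=
  stmt_17_general n c hc P hP k hk hzero z hz hPz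
end

section
/- Let F be a polynomial of degree n with F(z) ≠ 0 for |z| = 1, and let G(z) = z^n · conj(F(1/conj(z))). Then for every z with |z| = 1, |G'(z)|² = n²|F(z)|² + |F'(z)|² − 2n·Re(z F'(z)/F(z))·|F(z)|². -/
open Polynomial

/-!
Write `F̄` for `F` with conjugated coefficients, so that `G(w) = wⁿ F̄(1/w)` for `w ≠ 0`.
Differentiating, `z G'(z) = zⁿ (n F̄(1/z) - z⁻¹ F̄'(1/z))`, and on the unit circle `1/z = z̄` turns
this into `z G'(z) = zⁿ · conj (n F(z) - z F'(z))`. Hence `|G'(z)| = |n F(z) - z F'(z)|`, and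
expanding the square of the right-hand side gives the identity.
-/

open ComplexConjugate

namespace Complex

lemma re_div_mul_sq_norm (w a : ℂ) : (w / a).re * ‖a‖ ^ 2 = (w * conj a).re := by
  rcases eq_or_ne a 0 with rfl | ha
  · simp
  · have : w * conj a = (‖a‖ ^ 2 : ℝ) * (w / a) := by
      rw [ofReal_pow, ← mul_conj']
      field_simp
    rw [this, re_ofReal_mul, mul_comm]

lemma sq_norm_ofReal_mul_sub_mul {z : ℂ} (hz : ‖z‖ = 1) (r : ℝ) (a b : ℂ) :
    ‖(r : ℂ) * a - z * b‖ ^ 2 = r ^ 2 * ‖a‖ ^ 2 + ‖b‖ ^ 2 - 2 * r * (z * b / a).re * ‖a‖ ^ 2 := by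
  have hcross : (a * conj (z * b)).re = (z * b * conj a).re := by
    rw [← conj_re, map_mul, conj_conj, mul_comm]
  rw [mul_assoc _ (z * b / a).re, re_div_mul_sq_norm, Complex.sq_norm, normSq_sub, normSq_mul,
    normSq_mul, normSq_ofReal, normSq_eq_norm_sq z, hz, ← Complex.sq_norm, ← Complex.sq_norm,
    mul_assoc (r : ℂ), re_ofReal_mul, hcross]
  ring

end Complex

section Reciprocal

variable {𝕜 : Type*} [NontriviallyNormedField 𝕜]

lemma hasDerivAt_pow_mul_eval_inv (P : 𝕜[X]) (n : ℕ) {z : 𝕜} (hz : z ≠ 0) :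
    HasDerivAt (fun w => w ^ n * P.eval w⁻¹)
      (n * z ^ (n - 1) * P.eval z⁻¹ + z ^ n * (P.derivative.eval z⁻¹ * -(z ^ 2)⁻¹)) z :=
  (hasDerivAt_pow n z).mul ((P.hasDerivAt z⁻¹).comp z (hasDerivAt_inv hz))

lemma mul_eval_derivative_of_eval_eq_pow_mul_eval_inv {G P : 𝕜[X]} {n : ℕ}
    (hG : ∀ w ≠ 0, G.eval w = w ^ n * P.eval w⁻¹) {z : 𝕜} (hz : z ≠ 0) :
    z * G.derivative.eval z = z ^ n * (n * P.eval z⁻¹ - z⁻¹ * P.derivative.eval z⁻¹) := by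
  have hderiv := (hasDerivAt_pow_mul_eval_inv P n hz).congr_of_eventuallyEq
    (Filter.eventually_of_mem (isOpen_ne.mem_nhds hz) hG)
  rw [(G.hasDerivAt z).unique hderiv]
  rcases n with _ | n
  · simp only [pow_zero, one_mul]
    field_simp
    ring
  · simp only [Nat.add_sub_cancel, Nat.cast_add, Nat.cast_one, pow_succ]
    field_simp
    ring

end Reciprocal

theorem stmt_19_general (n : ℕ) (F G : Polynomial ℂ)
    (hG : ∀ z : ℂ, z ≠ 0 →
      G.eval z = z ^ n * (starRingEnd ℂ) (F.eval (1 / (starRingEnd ℂ) z))) :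
    ∀ z : ℂ, ‖z‖ = 1 →
      ‖(derivative G).eval z‖ ^ 2 =
        (n : ℝ) ^ 2 * ‖F.eval z‖ ^ 2 + ‖(derivative F).eval z‖ ^ 2 -
          2 * n * (z * (derivative F).eval z / F.eval z).re * ‖F.eval z‖ ^ 2 := by
  intro z hz
  have hz0 : z ≠ 0 := by rintro rfl; simp at hz
  have hrecip : ∀ w ≠ 0, G.eval w = w ^ n * (F.map conj).eval w⁻¹ := fun w hw => by
    rw [hG w hw, ← eval_map_apply, map_div₀, map_one, Complex.conj_conj, one_div]
  have hzG := mul_eval_derivative_of_eval_eq_pow_mul_eval_inv hrecip hz0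
  rw [Complex.inv_eq_conj hz, derivative_map, eval_map_apply, eval_map_apply, ← map_natCast conj,
    ← map_mul, ← map_mul, ← map_sub] at hzG
  have hnorm : ‖G.derivative.eval z‖ = ‖(n : ℝ) * F.eval z - z * F.derivative.eval z‖ := by
    rw [← one_mul ‖G.derivative.eval z‖, ← hz, ← norm_mul, hzG, norm_mul, norm_pow, hz, one_pow,
      one_mul, Complex.norm_conj, Complex.ofReal_natCast]
  rw [hnorm, Complex.sq_norm_ofReal_mul_sub_mul hz]

theorem stmt_19 (n : ℕ) (hn : 1 ≤ n) (F G : Polynomial ℂ) (hdeg : F.natDegree = n)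
    (hF : ∀ z : ℂ, ‖z‖ = 1 → F.eval z ≠ 0)
    (hG : ∀ z : ℂ, z ≠ 0 →
      G.eval z = z ^ n * (starRingEnd ℂ) (F.eval (1 / (starRingEnd ℂ) z))) :
    ∀ z : ℂ, ‖z‖ = 1 →
      ‖(derivative G).eval z‖ ^ 2 =
        (n : ℝ) ^ 2 * ‖F.eval z‖ ^ 2 + ‖(derivative F).eval z‖ ^ 2 -
          2 * n * (z * (derivative F).eval z / F.eval z).re * ‖F.eval z‖ ^ 2 :=
  stmt_19_general n F G hG
end
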